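/- arXiv:1104.4039 — 2 statements merged into one kernel-verified Lean document; each statement's English description precedes it below -/
import Mathlib

section
/- Let N be a monotone Boolean automata network of size n whose x-critical cycles all have node set V (the full node set). If x ⇒ y and x' ⇒ y' are two non-sequentialisable transitions of N, then either (x', y') = (x, y) or (x', y') = (y, x). In other words, N has at most two non-sequentialisable transitions, and they are mutually reverse. -/
namespace BAN

/-- A configuration of a Boolean automata network of size `n`. -/
abbrev Config (n : ℕ) := Fin n → Bool

/-- `s(b) = 2b - 1 ∈ {-1,1}`. -/
def sgn (b : Bool) : ℤ := if b then 1 else -1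

/-- Boolean as integer `0/1`. -/
def bint (b : Bool) : ℤ := if b then 1 else 0

/-- `x̄^i` : `x` with coordinate `i` flipped. -/
def flip {n : ℕ} (x : Config n) (i : Fin n) : Config n := Function.update x i (!x i)

/-- A Boolean automata network of size `n`: the family of local transition functions. -/
def Net (n : ℕ) := Fin n → Config n → Bool

/-- `f i` is positively (locally) monotone in coordinate `j`:
`s(x_j)·(f_i(x) − f_i(x̄^j)) ≥ 0` for all `x`. -/
def posIn {n : ℕ} (f : Net n) (i j : Fin n) : Prop :=
  ∀ x : Config n, 0 ≤ sgn (x j) * (bint (f i x) - bint (f i (flip x j)))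

/-- `f i` is negatively (locally) monotone in coordinate `j`. -/
def negIu {n : ℕ} (f : Net n) (i j : Fin n) : Prop :=
  ∀ x : Config n, sgn (x j) * (bint (f i x) - bint (f i (flip x j))) ≤ 0

/-- The network is (locally) monotone. -/
def MonotoneNet {n : ℕ} (f : Net n) : Prop := ∀ i j, posIn f i j ∨ negIu f i j

/-- `(j,i)` is an arc of the interaction graph: `f i` depends on coordinate `j`. -/
def arc {n : ℕ} (f : Net n) (j i : Fin n) : Prop := ∃ x, f i x ≠ f i (flip x j)

/-- The arc `(j,i)` exists and has sign `s` (`+1` or `-1`). -/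
def hasSign {n : ℕ} (f : Net n) (j i : Fin n) (s : ℤ) : Prop :=
  arc f j i ∧ ((s = 1 ∧ posIn f i j) ∨ (s = -1 ∧ negIu f i j))

/-- Automaton `i` is unstable in `x`. -/
def unstable {n : ℕ} (f : Net n) (x : Config n) (i : Fin n) : Prop := f i x ≠ x i

/-- The arc `(j,i)` is frustrated in configuration `x`: `s(x_j)·s(x_i) = − sign(j,i)`. -/
def frustrated {n : ℕ} (f : Net n) (x : Config n) (j i : Fin n) : Prop :=
  ∃ s : ℤ, hasSign f j i s ∧ sgn (x j) * sgn (x i) = -s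

/-- `Δ(x,y)`: the set of coordinates where `x` and `y` differ. -/
def diff {n : ℕ} (x y : Config n) : Finset (Fin n) :=
  Finset.univ.filter fun i => x i ≠ y i

/-- `U(x)`: the set of unstable automata of `x`. -/
def U {n : ℕ} (f : Net n) (x : Config n) : Finset (Fin n) :=
  Finset.univ.filter fun i => f i x ≠ x i

/-- Elementary transition `x → y`: `∅ ≠ Δ(x,y) ⊆ U(x)`. -/
def elemTrans {n : ℕ} (f : Net n) (x y : Config n) : Prop :=
  (diff x y).Nonempty ∧ diff x y ⊆ U f x

/-- Asynchronous (atomic) transition: flip one unstable coordinate. -/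
def asyncStep {n : ℕ} (f : Net n) (x y : Config n) : Prop :=
  ∃ i, unstable f x i ∧ y = flip x i

/-- Asynchronous reachability (derivations). -/
def asyncReach {n : ℕ} (f : Net n) : Config n → Config n → Prop :=
  Relation.ReflTransGen (asyncStep f)

/-- `x ⇒ y` is sequentialisable: there is a chain of strictly smaller elementary
transitions from `x` to `y`. -/
def seqable {n : ℕ} (f : Net n) (x y : Config n) : Prop :=
  ∃ l : List (Config n),
    l.Chain' (fun u v => elemTrans f u v ∧ (diff u v).card < (diff x y).card) ∧
    l.head? = some x ∧ l.getLast? = some y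

/-- Non-sequentialisable (normal) synchronous transition. -/
def nonSeq {n : ℕ} (f : Net n) (x y : Config n) : Prop :=
  elemTrans f x y ∧ 2 ≤ (diff x y).card ∧ ¬ seqable f x y

/-- Cyclic successor on `Fin ℓ`. -/
def cnext {ℓ : ℕ} (k : Fin ℓ) : Fin ℓ := ⟨(k.val + 1) % ℓ, Nat.mod_lt _ k.pos⟩

/-- `c : Fin ℓ → Fin n` describes a cycle of the interaction graph of `f`
(a closed walk with pairwise distinct arcs). -/
def isCycle {n : ℕ} (f : Net n) {ℓ : ℕ} (c : Fin ℓ → Fin n) : Prop :=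
  0 < ℓ ∧ (∀ k, arc f (c k) (c (cnext k))) ∧
    Function.Injective (fun k => (c k, c (cnext k)))

/-- The cycle `c` is `x`-critical: all nodes unstable in `x`, all arcs frustrated in `x`. -/
def xCriticalCycle {n : ℕ} (f : Net n) (x : Config n) {ℓ : ℕ} (c : Fin ℓ → Fin n) : Prop :=
  isCycle f c ∧ (∀ k, unstable f x (c k)) ∧ ∀ k, frustrated f x (c k) (c (cnext k))

/-- `x̄^S`: flip all coordinates of `x` in `S`. -/
def flipSet {n : ℕ} (x : Config n) (S : Finset (Fin n)) : Config n :=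
  fun i => if i ∈ S then !x i else x i

/-- `x̄^V`. -/
def flipAll {n : ℕ} (x : Config n) : Config n := fun i => !x i

/-- Union of the first `t` blocks of a list of finsets. -/
def prefUnion {n : ℕ} (D : List (Finset (Fin n))) (t : ℕ) : Finset (Fin n) :=
  (D.take t).foldr (· ∪ ·) ∅

/-- `x ⇒ y` is totally sequentialisable: some ordering of `Δ(x,y)` gives a chain of
asynchronous transitions from `x` to `y`. -/
def totallySeq {n : ℕ} (f : Net n) (x y : Config n) : Prop :=
  ∃ l : List (Fin n), l.Nodup ∧ l.toFinset = diff x y ∧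
    ∀ t : Fin l.length, unstable f ((l.take t.val).foldl flip x) (l.get t)

/-- Attractor of the asynchronous transition graph: nonempty, closed, strongly
connected set of configurations (terminal SCC). -/
def isAttractor {n : ℕ} (f : Net n) (A : Set (Config n)) : Prop :=
  A.Nonempty ∧ (∀ a ∈ A, ∀ b, asyncStep f a b → b ∈ A) ∧
    ∀ a ∈ A, ∀ b ∈ A, asyncReach f a b

/-- A configuration is transient if it belongs to no attractor. -/
def transientCfg {n : ℕ} (f : Net n) (z : Config n) : Prop :=
  ¬ ∃ A : Set (Config n), isAttractor f A ∧ z ∈ A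

end BAN

/-!
If `x ⇒ y` is non-sequentialisable, the set `Δ(x,y)` cannot be flipped one automaton at a time.
By monotonicity, an unstable automaton `i` stays unstable after flipping a set `S` unless some
arc `j → i` with `j ∈ S` is frustrated in `x`. So if every subset of `Δ(x,y)` had an automaton
without frustrated in-arcs from that subset, flipping such automata last would sequentialise
`x ⇒ y`. Hence some nonempty `T ⊆ Δ(x,y)` has a frustrated in-arc into each of its automata,
which produces an `x`-critical cycle inside `T`; as critical cycles span `V`, `Δ(x,y) = V`, so
`U(x) = V` and `y = x̄^V`. The same argument applied to `Δ(x,x')` for two configurations `x, x'`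
with `U(x) = U(x') = V` gives `Δ(x,x') = ∅` or `Δ(x,x') = V`.
-/

theorem Function.exists_mem_periodicPts {α : Type*} [Finite α] [Nonempty α] (g : α → α) :
    ∃ z, z ∈ Function.periodicPts g := by
  obtain ⟨a⟩ := ‹Nonempty α›
  obtain ⟨p, q, hpq, heq⟩ := Finite.exists_ne_map_eq_of_infinite fun k : ℕ => g^[k] a
  wlog hlt : p < q generalizing p q
  · exact this q p hpq.symm heq.symm (by omega)
  refine ⟨g^[p] a, Function.mk_mem_periodicPts (n := q - p) (by omega) ?_⟩
  rw [Function.IsPeriodicPt, Function.IsFixedPt, ← Function.iterate_add_apply,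
    Nat.sub_add_cancel hlt.le]
  exact heq.symm

namespace BAN

section Configurations

variable {n : ℕ}

@[simp]
lemma mem_diff {x y : Config n} {i : Fin n} : i ∈ diff x y ↔ x i ≠ y i := by
  simp [diff]

lemma diff_eq_empty_iff {x y : Config n} : diff x y = ∅ ↔ x = y := by
  simp [Finset.eq_empty_iff_forall_notMem, funext_iff]

lemma diff_eq_univ_iff {x y : Config n} : diff x y = Finset.univ ↔ y = flipAll x := by
  simp only [Finset.eq_univ_iff_forall, mem_diff, funext_iff, flipAll]
  exact forall_congr' fun i => by cases x i <;> cases y i <;> simp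

lemma diff_flip (x : Config n) (i : Fin n) : diff x (flip x i) = {i} := by
  ext k
  by_cases hk : k = i
  · subst hk; simp [flip]
  · simp [flip, hk]

lemma flipAll_flipAll (x : Config n) : flipAll (flipAll x) = x := by
  funext i; simp [flipAll]

@[simp]
lemma flipSet_empty (x : Config n) : flipSet x ∅ = x := by
  funext i; simp [flipSet]

lemma flipSet_of_notMem {x : Config n} {S : Finset (Fin n)} {i : Fin n} (hi : i ∉ S) :
    flipSet x S i = x i := by
  simp [flipSet, hi]

lemma flipSet_insert {x : Config n} {S : Finset (Fin n)} {j : Fin n} (hj : j ∉ S) :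
    flipSet x (insert j S) = flip (flipSet x S) j := by
  funext k
  by_cases hk : k = j
  · subst hk; simp [flipSet, flip, hj]
  · simp [flipSet, flip, hk]

lemma flipSet_diff (x y : Config n) : flipSet x (diff x y) = y := by
  funext k
  by_cases hk : x k = y k <;> cases hx : x k <;> simp_all [flipSet]

lemma unstable_iff {f : Net n} {x : Config n} {i : Fin n} :
    unstable f x i ↔ f i x = !x i := by
  cases hf : f i x <;> cases hx : x i <;> simp [unstable, hf, hx]

lemma mem_U {f : Net n} {x : Config n} {i : Fin n} : i ∈ U f x ↔ unstable f x i := by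
  simp [U, unstable]

end Configurations

section Monotone

variable {n : ℕ} {f : Net n}

lemma frustrated_of_apply_flip (hmono : MonotoneNet f) {x w : Config n} {i j : Fin n}
    (hwj : w j = x j) (hw : f i w = !x i) (hflip : f i (flip w j) = x i) :
    frustrated f x j i := by
  have harc : arc f j i := ⟨w, by rw [hw, hflip]; cases x i <;> simp⟩
  rcases hmono i j with hpos | hneg
  · refine ⟨1, ⟨harc, Or.inl ⟨rfl, hpos⟩⟩, ?_⟩
    have := hpos w
    rw [hwj, hw, hflip] at this
    cases hxj : x j <;> cases hxi : x i <;> simp_all [sgn, bint]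
  · refine ⟨-1, ⟨harc, Or.inr ⟨rfl, hneg⟩⟩, ?_⟩
    have := hneg w
    rw [hwj, hw, hflip] at this
    cases hxj : x j <;> cases hxi : x i <;> simp_all [sgn, bint]

lemma apply_flipSet_of_forall_not_frustrated (hmono : MonotoneNet f) {x : Config n}
    {i : Fin n} (hi : f i x = !x i) {S : Finset (Fin n)}
    (hS : ∀ j ∈ S, ¬ frustrated f x j i) : f i (flipSet x S) = !x i := by
  induction S using Finset.induction_on with
  | empty => simpa using hi
  | insert j S hjS ih =>
    have hw := ih fun k hk => hS k (Finset.mem_insert_of_mem hk)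
    rw [flipSet_insert hjS]
    by_contra hflip
    refine hS j (Finset.mem_insert_self j S) (frustrated_of_apply_flip hmono
      (flipSet_of_notMem hjS) hw ?_)
    simpa using hflip

end Monotone

section Cycles

lemma exists_cycle_of_forall_exists_rel {α : Type*} (r : α → α → Prop) {S : Finset α}
    (hS : S.Nonempty) (h : ∀ i ∈ S, ∃ j ∈ S, r j i) :
    ∃ (ℓ : ℕ) (c : Fin ℓ → α), 0 < ℓ ∧ Function.Injective c ∧ (∀ k, c k ∈ S) ∧
      ∀ k, r (c k) (c (cnext k)) := by
  choose g hgS hg using h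
  let pred : S → S := fun a => ⟨g a a.2, hgS a a.2⟩
  have : Nonempty S := hS.to_subtype
  obtain ⟨z, hz⟩ := Function.exists_mem_periodicPts pred
  set ℓ := Function.minimalPeriod pred z
  have hℓ : 0 < ℓ := Function.minimalPeriod_pos_of_mem_periodicPts hz
  -- walking backwards along `pred` from `z` traverses the cycle forwards
  refine ⟨ℓ, fun k => (pred^[ℓ - 1 - k] z : α), hℓ, ?_, fun k => (pred^[ℓ - 1 - k] z).2, ?_⟩
  · intro k k' hkk'
    have := Function.iterate_injOn_Iio_minimalPeriod (f := pred) (x := z)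
      (show ℓ - 1 - k < ℓ by omega) (show ℓ - 1 - k' < ℓ by omega) (Subtype.ext hkk')
    exact Fin.ext (by omega)
  · intro k
    have hpred : pred^[ℓ - 1 - k] z = pred (pred^[ℓ - 1 - (cnext k : ℕ)] z) := by
      rw [← Function.iterate_succ_apply' pred]
      rcases Nat.lt_or_ge (k + 1) ℓ with hlt | hge
      · simp only [cnext, Nat.mod_eq_of_lt hlt]
        congr 1
        omega
      · simp only [cnext, show (k : ℕ) + 1 = ℓ by omega, Nat.mod_self,
          show ℓ - 1 - k = 0 by omega, Nat.sub_zero, Nat.succ_eq_add_one,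
          Nat.sub_add_cancel hℓ, Function.iterate_zero, id]
        exact Function.iterate_minimalPeriod.symm
    dsimp only
    rw [hpred]
    exact hg _ _

end Cycles

section Critical

variable {n : ℕ} {f : Net n}

def CriticalCyclesSpanning (f : Net n) : Prop :=
  ∀ (z : Config n) (ℓ : ℕ) (c : Fin ℓ → Fin n), xCriticalCycle f z c → ∀ i : Fin n, ∃ k, c k = i

lemma exists_xCriticalCycle_of_forall_frustrated {x : Config n} {S : Finset (Fin n)}
    (hS : S.Nonempty) (hunst : ∀ i ∈ S, unstable f x i)
    (hfr : ∀ i ∈ S, ∃ j ∈ S, frustrated f x j i) :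
    ∃ (ℓ : ℕ) (c : Fin ℓ → Fin n), xCriticalCycle f x c ∧ ∀ k, c k ∈ S := by
  obtain ⟨ℓ, c, hℓ, hinj, hcS, hc⟩ := exists_cycle_of_forall_exists_rel (frustrated f x) hS hfr
  refine ⟨ℓ, c, ⟨⟨hℓ, fun k => ?_, fun k k' h => hinj (congrArg Prod.fst h)⟩,
    fun k => hunst _ (hcS k), hc⟩, hcS⟩
  obtain ⟨s, ⟨harc, -⟩, -⟩ := hc k
  exact harc

lemma CriticalCyclesSpanning.eq_univ_of_forall_frustrated (hcrit : CriticalCyclesSpanning f)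
    {x : Config n} {S : Finset (Fin n)} (hS : S.Nonempty) (hunst : ∀ i ∈ S, unstable f x i)
    (hfr : ∀ i ∈ S, ∃ j ∈ S, frustrated f x j i) : S = Finset.univ := by
  obtain ⟨ℓ, c, hc, hcS⟩ := exists_xCriticalCycle_of_forall_frustrated hS hunst hfr
  refine Finset.eq_univ_of_forall fun i => ?_
  obtain ⟨k, rfl⟩ := hcrit x ℓ c hc i
  exact hcS k

end Critical

section Sequentialisation

variable {n : ℕ} {f : Net n}

lemma seqable_of_asyncReach {x y : Config n} (h : asyncReach f x y)
    (hcard : 2 ≤ (diff x y).card) : seqable f x y := by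
  have hsteps : Relation.ReflTransGen
      (fun u v => elemTrans f u v ∧ (diff u v).card < (diff x y).card) x y := by
    refine Relation.ReflTransGen.mono (fun u v (huv : asyncStep f u v) => ?_) x y h
    obtain ⟨i, hi, rfl⟩ := huv
    refine ⟨⟨?_, ?_⟩, ?_⟩ <;> rw [diff_flip]
    · exact Finset.singleton_nonempty i
    · exact Finset.singleton_subset_iff.2 (mem_U.2 hi)
    · rw [Finset.card_singleton]; omega
  obtain ⟨l, hl, hlast⟩ := List.exists_isChain_cons_of_relationReflTransGen hsteps
  exact ⟨x :: l, hl, rfl, by rw [List.getLast?_eq_some_getLast (List.cons_ne_nil x l), hlast]⟩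

lemma asyncReach_flipSet (hmono : MonotoneNet f) {x : Config n} {T : Finset (Fin n)}
    (hunst : ∀ i ∈ T, f i x = !x i)
    (hsource : ∀ T' ⊆ T, T'.Nonempty → ∃ i ∈ T', ∀ j ∈ T', ¬ frustrated f x j i) :
    asyncReach f x (flipSet x T) := by
  induction T using Finset.strongInduction with
  | H T ih =>
  rcases T.eq_empty_or_nonempty with rfl | hT
  · rw [flipSet_empty]
    exact Relation.ReflTransGen.refl
  obtain ⟨i, hiT, hi⟩ := hsource T subset_rfl hT
  have hprev := ih (T.erase i) (Finset.erase_ssubset hiT)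
    (fun j hj => hunst j (Finset.mem_of_mem_erase hj))
    (fun T' hT' => hsource T' (hT'.trans (Finset.erase_subset i T)))
  have hnotMem : i ∉ T.erase i := Finset.notMem_erase i T
  refine hprev.tail ⟨i, ?_, by rw [← flipSet_insert hnotMem, Finset.insert_erase hiT]⟩
  rw [unstable_iff, flipSet_of_notMem hnotMem]
  exact apply_flipSet_of_forall_not_frustrated hmono (hunst i hiT)
    fun j hj => hi j (Finset.mem_of_mem_erase hj)

lemma nonSeq.diff_eq_univ (hmono : MonotoneNet f) (hcrit : CriticalCyclesSpanning f)
    {x y : Config n} (hns : nonSeq f x y) : diff x y = Finset.univ := by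
  obtain ⟨⟨-, hU⟩, hcard, hnseq⟩ := hns
  have hunst : ∀ i ∈ diff x y, unstable f x i := fun i hi => mem_U.1 (hU hi)
  by_contra hne
  refine hnseq (seqable_of_asyncReach ?_ hcard)
  rw [← flipSet_diff x y]
  refine asyncReach_flipSet hmono (fun i hi => unstable_iff.1 (hunst i hi)) fun T hT hTne => ?_
  by_contra! hfr
  have hTuniv := hcrit.eq_univ_of_forall_frustrated hTne (fun i hi => hunst i (hT hi)) hfr
  exact hne (Finset.univ_subset_iff.1 (hTuniv ▸ hT))

lemma nonSeq.U_eq_univ (hmono : MonotoneNet f) (hcrit : CriticalCyclesSpanning f)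
    {x y : Config n} (hns : nonSeq f x y) : U f x = Finset.univ :=
  Finset.univ_subset_iff.1 (hns.diff_eq_univ hmono hcrit ▸ hns.1.2)

lemma nonSeq.eq_flipAll (hmono : MonotoneNet f) (hcrit : CriticalCyclesSpanning f)
    {x y : Config n} (hns : nonSeq f x y) : y = flipAll x :=
  diff_eq_univ_iff.1 (hns.diff_eq_univ hmono hcrit)

end Sequentialisation

lemma eq_or_eq_flipAll_of_U_eq_univ {n : ℕ} {f : Net n} (hmono : MonotoneNet f)
    (hcrit : CriticalCyclesSpanning f) {x x' : Config n} (hx : U f x = Finset.univ)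
    (hx' : U f x' = Finset.univ) : x' = x ∨ x' = flipAll x := by
  have hunst : ∀ {z : Config n}, U f z = Finset.univ → ∀ i, f i z = !z i :=
    fun hz i => unstable_iff.1 (mem_U.1 (hz ▸ Finset.mem_univ i))
  rcases (diff x x').eq_empty_or_nonempty with hD | hD
  · exact Or.inl (diff_eq_empty_iff.1 hD).symm
  refine Or.inr (diff_eq_univ_iff.1 (hcrit.eq_univ_of_forall_frustrated hD
    (fun i _ => unstable_iff.2 (hunst hx i)) fun i hi => ?_))
  by_contra! hfr
  have h := apply_flipSet_of_forall_not_frustrated hmono (hunst hx i) hfr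
  rw [flipSet_diff, hunst hx' i] at h
  exact mem_diff.1 hi (by simpa using h.symm)

/-- if every critical cycle of `N` has node set `V`, then `N` has at most
two non-sequentialisable transitions and they are mutually reverse. -/
theorem stmt8 {n : ℕ} (f : Net n) (hmono : MonotoneNet f)
    (hcrit : ∀ (z : Config n) (ℓ : ℕ) (c : Fin ℓ → Fin n),
      xCriticalCycle f z c → ∀ i : Fin n, ∃ k, c k = i)
    (x y x' y' : Config n) (hns : nonSeq f x y) (hns' : nonSeq f x' y') :
    (x' = x ∧ y' = y) ∨ (x' = y ∧ y' = x) := by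
  have hU := hns.U_eq_univ hmono hcrit
  have hU' := hns'.U_eq_univ hmono hcrit
  obtain rfl := hns.eq_flipAll hmono hcrit
  obtain rfl := hns'.eq_flipAll hmono hcrit
  rcases eq_or_eq_flipAll_of_U_eq_univ hmono hcrit hU hU' with rfl | rfl
  · exact Or.inl ⟨rfl, rfl⟩
  · exact Or.inr ⟨rfl, flipAll_flipAll x⟩

end BAN
end

section
/- Let N be a monotone Boolean automata network of size n in which no cycle of the signed interaction graph of length at most m is critical (i.e., x-critical for some x). Then every synchronous elementary transition x ⇒ y of size |Δ(x,y)| ≤ m is totally sequentialisable into a chain of asynchronous transitions from x to y. -/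
/-! A frustration-free ordering exists inside `Δ(x,y)`: a cycle of frustrated arcs through
automata of `Δ(x,y) ⊆ U(x)` would be an `x`-critical cycle of length `≤ |Δ(x,y)| ≤ m`, so
the frustration digraph on `Δ(x,y)` is acyclic and can be sorted topologically. Flipping the
automata in that order keeps every later one unstable: by local monotonicity, flipping `j`
can only stabilise `i` if the arc `(j,i)` is frustrated. -/

namespace BAN

section Combinatorics

variable {α : Type*} {R : α → α → Prop}

lemma exists_injective_cycle_of_forall_exists [Finite α] [Nonempty α]
    (h : ∀ a, ∃ b, R a b) :
    ∃ (ℓ : ℕ) (c : Fin ℓ → α), 0 < ℓ ∧ Function.Injective c ∧ ∀ k, R (c k) (c (cnext k)) := by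
  classical
  choose nxt hnxt using h
  obtain ⟨a₀⟩ := ‹Nonempty α›
  set g : ℕ → α := fun k => nxt^[k] a₀
  have hg : ∀ k, g (k + 1) = nxt (g k) := fun k => Function.iterate_succ_apply' nxt k a₀
  have hper : ∃ ℓ, 0 < ℓ ∧ ∃ a, g (a + ℓ) = g a := by
    obtain ⟨u, v, huv, hguv⟩ := Finite.exists_ne_map_eq_of_infinite g
    rcases Nat.lt_or_gt_of_ne huv with h | h
    · exact ⟨v - u, by omega, u, by rw [Nat.add_sub_cancel' h.le, hguv]⟩
    · exact ⟨u - v, by omega, v, by rw [Nat.add_sub_cancel' h.le, hguv]⟩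
  obtain ⟨hℓ, a, ha⟩ := Nat.find_spec hper
  set ℓ := Nat.find hper
  have hlt : ∀ k₁ k₂ : Fin ℓ, k₁ < k₂ → g (a + k₁) ≠ g (a + k₂) := fun k₁ k₂ hk heq =>
    Nat.find_min hper (show (k₂ : ℕ) - k₁ < ℓ by omega)
      ⟨by omega, a + k₁, by rw [Nat.add_assoc, Nat.add_sub_cancel' hk.le, heq]⟩
  refine ⟨ℓ, fun k => g (a + k), hℓ, fun k₁ k₂ heq => ?_, fun k => ?_⟩
  · by_contra hne
    rcases lt_or_gt_of_ne hne with hk | hk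
    exacts [hlt _ _ hk heq, hlt _ _ hk heq.symm]
  · show R (g (a + k)) (g (a + cnext k))
    suffices g (a + cnext k) = nxt (g (a + k)) from this ▸ hnxt _
    rcases Nat.lt_or_ge (k + 1) ℓ with hk | hk
    · rw [show ((cnext k : Fin ℓ) : ℕ) = k + 1 from Nat.mod_eq_of_lt hk, ← Nat.add_assoc, ← hg]
    · have hk' : (k : ℕ) + 1 = ℓ := by omega
      rw [show ((cnext k : Fin ℓ) : ℕ) = 0 by simp [cnext, hk'], ← hg, Nat.add_assoc, hk',
        Nat.add_zero, ha]

lemma exists_injective_cycle_in_finset (T : Finset α) (hT : T.Nonempty)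
    (h : ∀ a ∈ T, ∃ b ∈ T, R a b) :
    ∃ (ℓ : ℕ) (c : Fin ℓ → α), 0 < ℓ ∧ ℓ ≤ T.card ∧ Function.Injective c ∧ (∀ k, c k ∈ T) ∧
      ∀ k, R (c k) (c (cnext k)) := by
  have := hT.to_subtype
  obtain ⟨ℓ, c, hℓ, hinj, hR⟩ := exists_injective_cycle_of_forall_exists
    (R := fun a b : T => R a b) fun a => by
      obtain ⟨b, hb, hab⟩ := h a a.2
      exact ⟨⟨b, hb⟩, hab⟩
  refine ⟨ℓ, fun k => c k, hℓ, ?_, Subtype.val_injective.comp hinj, fun k => (c k).2, hR⟩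
  simpa using Fintype.card_le_of_injective c hinj

lemma exists_list_pairwise_of_forall_exists_sink [DecidableEq α] (S : Finset α)
    (hsink : ∀ T ⊆ S, T.Nonempty → ∃ i ∈ T, ∀ j ∈ T, ¬ R i j) :
    ∃ l : List α, l.Nodup ∧ l.toFinset = S ∧ l.Pairwise (fun a b => ¬ R a b) := by
  induction S using Finset.strongInduction with
  | _ S ih =>
    rcases S.eq_empty_or_nonempty with rfl | hne
    · exact ⟨[], List.nodup_nil, rfl, List.Pairwise.nil⟩
    obtain ⟨i, hiS, hi⟩ := hsink S subset_rfl hne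
    obtain ⟨l, hnd, hl, hpw⟩ := ih (S.erase i) (Finset.erase_ssubset hiS)
      fun T hT => hsink T (hT.trans (Finset.erase_subset _ _))
    have hmem : ∀ {j}, j ∈ l ↔ j ∈ S.erase i := by simp [← hl]
    refine ⟨i :: l, hnd.cons fun h => by simpa using hmem.1 h, ?_, ?_⟩
    · rw [List.toFinset_cons, hl, Finset.insert_erase hiS]
    · exact hpw.cons fun j hj => hi j (Finset.mem_of_mem_erase (hmem.1 hj))

end Combinatorics

variable {n : ℕ} {f : Net n} {x : Config n}

lemma foldl_flip_apply_of_notMem (L : List (Fin n)) {j : Fin n} (hj : j ∉ L) :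
    L.foldl flip x j = x j := by
  induction L generalizing x with
  | nil => rfl
  | cons a L ih =>
    rw [List.mem_cons, not_or] at hj
    rw [List.foldl_cons, ih hj.2, flip, Function.update_of_ne hj.1]

lemma ne_of_flip_of_not_frustrated (hmono : MonotoneNet f) {z : Config n} {i j : Fin n}
    (hzj : z j = x j) (hz : f i z ≠ x i) (hnf : ¬ frustrated f x j i) :
    f i (flip z j) ≠ x i := by
  intro heq
  have harc : arc f j i := ⟨z, heq ▸ hz⟩
  have hfz : f i z = !x i := by cases h : f i z <;> cases h' : x i <;> simp_all
  rcases hmono i j with hpos | hneg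
  · refine hnf ⟨1, ⟨harc, .inl ⟨rfl, hpos⟩⟩, ?_⟩
    have := hpos z
    rw [hfz, heq, hzj] at this
    revert this; cases x j <;> cases x i <;> decide
  · refine hnf ⟨-1, ⟨harc, .inr ⟨rfl, hneg⟩⟩, ?_⟩
    have := hneg z
    rw [hfz, heq, hzj] at this
    revert this; cases x j <;> cases x i <;> decide

lemma apply_foldl_flip_ne (hmono : MonotoneNet f) {i : Fin n} :
    ∀ (L : List (Fin n)) {z : Config n}, L.Nodup → (∀ j ∈ L, z j = x j) →
      (∀ j ∈ L, ¬ frustrated f x j i) → f i z ≠ x i → f i (L.foldl flip z) ≠ x i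
  | [], _, _, _, _, hz => hz
  | a :: L, z, hnd, hzL, hnf, hz => by
    rw [List.nodup_cons] at hnd
    refine apply_foldl_flip_ne hmono L hnd.2 (fun j hj => ?_)
      (fun j hj => hnf j (List.mem_cons_of_mem a hj))
      (ne_of_flip_of_not_frustrated hmono (hzL a List.mem_cons_self) hz (hnf a List.mem_cons_self))
    rw [flip, Function.update_of_ne (ne_of_mem_of_not_mem hj hnd.1)]
    exact hzL j (List.mem_cons_of_mem a hj)

lemma totallySeq_of_pairwise_not_frustrated (hmono : MonotoneNet f) {y : Config n}
    (l : List (Fin n)) (hnd : l.Nodup) (hl : l.toFinset = diff x y) (hU : diff x y ⊆ U f x)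
    (hpw : l.Pairwise fun a b => ¬ frustrated f x a b) :
    totallySeq f x y := by
  refine ⟨l, hnd, hl, fun ⟨t, ht⟩ => ?_⟩
  have hsplit : l.take t ++ l[t] :: l.drop (t + 1) = l := by
    rw [← List.drop_eq_getElem_cons, List.take_append_drop]
  obtain ⟨-, -, hdisj⟩ := List.nodup_append.1 (hsplit ▸ hnd)
  obtain ⟨-, -, hbefore⟩ := List.pairwise_append.1 (hsplit ▸ hpw)
  have hnotMem : l[t] ∉ l.take t := fun h => hdisj _ h _ List.mem_cons_self rfl
  have hxt : f l[t] x ≠ x l[t] := by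
    simpa [U] using hU (hl ▸ List.mem_toFinset.2 (List.getElem_mem ht))
  rw [List.get_eq_getElem, unstable, foldl_flip_apply_of_notMem _ hnotMem]
  exact apply_foldl_flip_ne hmono _ (hnd.sublist (List.take_sublist _ _)) (fun _ _ => rfl)
    (fun j hj => hbefore j hj _ List.mem_cons_self) hxt

lemma exists_not_frustrated_of_no_short_critical_cycle {m : ℕ}
    (hnc : ∀ (ℓ : ℕ) (c : Fin ℓ → Fin n), ℓ ≤ m → ¬ xCriticalCycle f x c)
    {T : Finset (Fin n)} (hTU : T ⊆ U f x) (hTm : T.card ≤ m) (hT : T.Nonempty) :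
    ∃ i ∈ T, ∀ j ∈ T, ¬ frustrated f x i j := by
  by_contra! h
  obtain ⟨ℓ, c, hℓ, hℓT, hinj, hcT, hfr⟩ := exists_injective_cycle_in_finset T hT h
  refine hnc ℓ c (hℓT.trans hTm)
    ⟨⟨hℓ, fun k => (hfr k).choose_spec.1.1, fun k₁ k₂ h => hinj (congrArg Prod.fst h)⟩,
      fun k => ?_, hfr⟩
  simpa [U, unstable] using hTU (hcT k)

theorem stmt17_general {n m : ℕ} (f : Net n) (hmono : MonotoneNet f)
    (hnc : ∀ (z : Config n) (ℓ : ℕ) (c : Fin ℓ → Fin n),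
      ℓ ≤ m → xCriticalCycle f z c → False)
    (x y : Config n) (ht : elemTrans f x y)
    (hle : (diff x y).card ≤ m) :
    totallySeq f x y := by
  obtain ⟨l, hnd, hl, hpw⟩ := exists_list_pairwise_of_forall_exists_sink (diff x y)
    fun T hT hTne => exists_not_frustrated_of_no_short_critical_cycle (hnc x)
      (hT.trans ht.2) ((Finset.card_le_card hT).trans hle) hTne
  exact totallySeq_of_pairwise_not_frustrated hmono l hnd hl ht.2 hpw

/-- if no cycle of length `≤ m` of the interaction graph is critical,
then every synchronous elementary transition of size `≤ m` is totally
sequentialisable. -/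
theorem stmt17 {n m : ℕ} (f : Net n) (hmono : MonotoneNet f)
    (hnc : ∀ (z : Config n) (ℓ : ℕ) (c : Fin ℓ → Fin n),
      ℓ ≤ m → xCriticalCycle f z c → False)
    (x y : Config n) (ht : elemTrans f x y) (hsync : 2 ≤ (diff x y).card)
    (hle : (diff x y).card ≤ m) :
    totallySeq f x y :=
  stmt17_general f hmono hnc x y ht hle

end BAN
end
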